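/- Let h > 0 and k, w ∈ C²([0,h]) with k > 0 on [0,h] and w(0) = w(h) = 0, and let ε > 0 satisfy k(z) ≥ ε for all z ∈ [0,h]. There exists a constant K > 0, depending only on sup_{[0,h]} |w|, k(0), ε and h, such that for every T > 0, every F ∈ C([0,T]), every q₀ ∈ C¹([0,h]), and every classical solution q of the transport equation with flux F and initial data q₀, one has for all t ∈ [0,T]: ∫₀ʰ q(z,t)² dz ≤ K e^{Kt} [ (1+t) ∫₀ʰ q₀(z)² dz + (1+t²) ∫₀ᵗ F(s)² ds ]. -/

import Mathlib

/-!
Multiplying the equation by `2 q` and integrating by parts in `z` shows that the energy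
`E t = ∫ q(z,t)² dz` satisfies `E' = 2 k(0) q(0,t) F(t) - ∫ 2 k q_z² + ∫ 2 w q q_z`; the transport
flux `w q²` contributes no boundary term because `w(0) = w(h) = 0`. Young's inequality and `ε ≤ k`
absorb the transport term into the dissipation `ε ∫ q_z²`, and the trace inequality
`q(0)² ≤ (1/h + 1) ∫ q² + ∫ q_z²` with Young again absorbs the boundary flux. Hence
`E' ≤ K E + K F²` with `K` depending only on `sup |w|`, `k(0)`, `ε`, `h`, and Grönwall's
inequality concludes.
-/

open MeasureTheory Set Filter intervalIntegral

/-- A classical solution of the transport equation `q_t + (w q)_z = (k q_z)_z`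
on `[0,h] × (0,T]` with flux boundary condition `q_z(0,t) = -F(t)`,
no-flux upper boundary condition `q_z(h,t) = 0`, and initial data `q₀`,
together with its partial derivatives `qz`, `qzz`, `qt`. -/
structure ClassicalSolution (h T : ℝ) (k w F q₀ : ℝ → ℝ)
    (q qz qzz qt : ℝ → ℝ → ℝ) : Prop where
  cont : ContinuousOn (fun x : ℝ × ℝ => q x.1 x.2) (Icc 0 h ×ˢ Icc 0 T)
  hasDeriv_z : ∀ z ∈ Icc (0:ℝ) h, ∀ t ∈ Ioc (0:ℝ) T,
    HasDerivWithinAt (fun z' => q z' t) (qz z t) (Icc 0 h) z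
  hasDeriv_zz : ∀ z ∈ Icc (0:ℝ) h, ∀ t ∈ Ioc (0:ℝ) T,
    HasDerivWithinAt (fun z' => qz z' t) (qzz z t) (Icc 0 h) z
  hasDeriv_t : ∀ z ∈ Icc (0:ℝ) h, ∀ t ∈ Ioc (0:ℝ) T,
    HasDerivWithinAt (fun t' => q z t') (qt z t) (Icc 0 T) t
  cont_z : ContinuousOn (fun x : ℝ × ℝ => qz x.1 x.2) (Icc 0 h ×ˢ Ioc 0 T)
  cont_zz : ContinuousOn (fun x : ℝ × ℝ => qzz x.1 x.2) (Icc 0 h ×ˢ Ioc 0 T)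
  cont_t : ContinuousOn (fun x : ℝ × ℝ => qt x.1 x.2) (Icc 0 h ×ˢ Ioc 0 T)
  pde : ∀ z ∈ Icc (0:ℝ) h, ∀ t ∈ Ioc (0:ℝ) T,
    qt z t + (derivWithin w (Icc 0 h) z * q z t + w z * qz z t)
      = derivWithin k (Icc 0 h) z * qz z t + k z * qzz z t
  bc_lower : ∀ t ∈ Ioc (0:ℝ) T, qz 0 t = -F t
  bc_upper : ∀ t ∈ Ioc (0:ℝ) T, qz h t = 0
  ic : ∀ z ∈ Icc (0:ℝ) h, q z 0 = q₀ z

/-- `q` is a classical solution of the transport equation (partial derivatives exist). -/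
def IsClassicalSolution (h T : ℝ) (k w F q₀ : ℝ → ℝ) (q : ℝ → ℝ → ℝ) : Prop :=
  ∃ qz qzz qt, ClassicalSolution h T k w F q₀ q qz qzz qt

open Real

theorem sq_le_integral_sq_add_integral_deriv_sq {f f' : ℝ → ℝ} {a b : ℝ} (hab : a < b)
    (hf : ContinuousOn f (Icc a b)) (hf' : ContinuousOn f' (Icc a b))
    (hderiv : ∀ x ∈ Ioo a b, HasDerivAt f (f' x) x) :
    f a ^ 2 ≤ ((b - a)⁻¹ + 1) * (∫ x in a..b, f x ^ 2) + ∫ x in a..b, f' x ^ 2 := by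
  have hint : ∀ {φ : ℝ → ℝ} {c d : ℝ}, ContinuousOn φ (Icc a b) → c ∈ Icc a b → d ∈ Icc a b →
      IntervalIntegrable φ volume c d := fun hφ hc hd =>
    (hφ.mono (uIcc_subset_Icc hc hd)).intervalIntegrable
  have ha : a ∈ Icc a b := left_mem_Icc.2 hab.le
  have hb : b ∈ Icc a b := right_mem_Icc.2 hab.le
  set R := ∫ x in a..b, (f x ^ 2 + f' x ^ 2)
  have hpoint : ∀ z ∈ Icc a b, f a ^ 2 ≤ f z ^ 2 + R := by
    intro z hz
    have hftc : ∫ x in a..z, 2 * f x * f' x = f z ^ 2 - f a ^ 2 :=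
      integral_eq_sub_of_hasDerivAt_of_le hz.1
        ((hf.mono (Icc_subset_Icc le_rfl hz.2)).pow 2)
        (fun x hx => ((hderiv x ⟨hx.1, hx.2.trans_le hz.2⟩).pow 2).congr_deriv (by ring))
        (hint ((continuousOn_const.mul hf).mul hf') ha hz)
    have hyoung : ∫ x in a..z, -(2 * f x * f' x) ≤ ∫ x in a..z, (f x ^ 2 + f' x ^ 2) :=
      integral_mono_on hz.1 (hint ((continuousOn_const.mul hf).mul hf').neg ha hz)
        (hint ((hf.pow 2).add (hf'.pow 2)) ha hz)
        (fun x _ => by nlinarith [sq_nonneg (f x + f' x)])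
    have hsub : ∫ x in a..z, (f x ^ 2 + f' x ^ 2) ≤ R :=
      integral_mono_interval le_rfl hz.1 hz.2
        (ae_of_all _ fun x => by positivity) (hint ((hf.pow 2).add (hf'.pow 2)) ha hb)
    rw [intervalIntegral.integral_neg, hftc] at hyoung
    linarith
  have havg : (b - a) * f a ^ 2 ≤ (∫ x in a..b, f x ^ 2) + (b - a) * R := by
    have := integral_mono_on hab.le intervalIntegrable_const
      ((hint (hf.pow 2) ha hb).add intervalIntegrable_const) hpoint
    rwa [integral_add (hint (hf.pow 2) ha hb) intervalIntegrable_const,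
      intervalIntegral.integral_const, intervalIntegral.integral_const, smul_eq_mul,
      smul_eq_mul] at this
  have hR : R = (∫ x in a..b, f x ^ 2) + ∫ x in a..b, f' x ^ 2 :=
    integral_add (hint (hf.pow 2) ha hb) (hint (hf'.pow 2) ha hb)
  have hba : 0 < b - a := sub_pos.2 hab
  refine le_of_mul_le_mul_left ?_ hba
  calc (b - a) * f a ^ 2 ≤ (∫ x in a..b, f x ^ 2) + (b - a) * R := havg
    _ = _ := by rw [hR]; field_simp; ring

theorem integral_energy_density_eq {u u' u'' v k k' w w' : ℝ → ℝ} {a b : ℝ} (hab : a ≤ b)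
    (hu : ContinuousOn u (Icc a b)) (hu' : ContinuousOn u' (Icc a b))
    (hv : ContinuousOn v (Icc a b)) (hk : ContinuousOn k (Icc a b))
    (hw : ContinuousOn w (Icc a b))
    (hu_deriv : ∀ z ∈ Ioo a b, HasDerivAt u (u' z) z)
    (hu'_deriv : ∀ z ∈ Ioo a b, HasDerivAt u' (u'' z) z)
    (hk_deriv : ∀ z ∈ Ioo a b, HasDerivAt k (k' z) z)
    (hw_deriv : ∀ z ∈ Ioo a b, HasDerivAt w (w' z) z)
    (heq : ∀ z ∈ Ioo a b, v z + (w' z * u z + w z * u' z) = k' z * u' z + k z * u'' z) :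
    ∫ z in a..b, (2 * u z * v z + 2 * k z * u' z ^ 2 - 2 * w z * u z * u' z)
      = 2 * (k b * u b * u' b - w b * u b ^ 2) - 2 * (k a * u a * u' a - w a * u a ^ 2) := by
  -- By the equation, the integrand is the derivative of the flux `2 (k u u' - w u²)`.
  refine integral_eq_sub_of_hasDerivAt_of_le (f := fun z =>
    2 * (k z * u z * u' z - w z * u z ^ 2)) hab (by fun_prop) (fun z hz => ?_)
    (ContinuousOn.intervalIntegrable_of_Icc hab (by fun_prop))
  have hflux := ((((hk_deriv z hz).mul (hu_deriv z hz)).mul (hu'_deriv z hz)).sub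
    ((hw_deriv z hz).mul ((hu_deriv z hz).pow 2))).const_mul 2
  refine hflux.congr_deriv ?_
  simp only [Pi.mul_apply, Pi.pow_apply]
  linear_combination (-2 * u z) * heq z hz

theorem continuousOn_intervalIntegral_of_continuousOn_prod {f : ℝ → ℝ → ℝ} {a b c d : ℝ}
    (hf : ContinuousOn (Function.uncurry f) (uIcc a b ×ˢ Icc c d)) :
    ContinuousOn (fun t => ∫ z in a..b, f z t) (Icc c d) := by
  rcases lt_or_ge d c with hdc | hcd
  · simp [Icc_eq_empty_of_lt hdc]
  -- Extend `f` continuously to the whole plane by clamping both variables.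
  let g : ℝ → ℝ → ℝ := fun t z => f (projIcc (a ⊓ b) (a ⊔ b) inf_le_sup z) (projIcc c d hcd t)
  have hg : Continuous (Function.uncurry g) :=
    hf.comp_continuous (f := fun p : ℝ × ℝ =>
      ((projIcc (a ⊓ b) (a ⊔ b) inf_le_sup p.2 : ℝ), (projIcc c d hcd p.1 : ℝ)))
      (by fun_prop) fun p => ⟨Subtype.prop _, Subtype.prop _⟩
  refine (continuous_parametric_intervalIntegral_of_continuous' hg a b
    ).continuousOn.congr fun t ht => integral_congr fun z hz => ?_
  simp [g, projIcc_of_mem _ hz, projIcc_of_mem _ ht]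

theorem hasDerivAt_intervalIntegral_of_continuousOn {f f' : ℝ → ℝ → ℝ} {a b t₀ : ℝ}
    {s : Set ℝ} (hs : IsOpen s) (ht₀ : t₀ ∈ s)
    (hf : ∀ t ∈ s, ContinuousOn (f · t) (uIcc a b))
    (hf' : ContinuousOn (Function.uncurry f') (uIcc a b ×ˢ s))
    (hderiv : ∀ z ∈ uIcc a b, ∀ t ∈ s, HasDerivAt (f z ·) (f' z t) t) :
    HasDerivAt (fun t => ∫ z in a..b, f z t) (∫ z in a..b, f' z t₀) t₀ := by
  obtain ⟨r, hr, hball⟩ := Metric.isOpen_iff.1 hs t₀ ht₀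
  have hclosed : Metric.closedBall t₀ (r / 2) ⊆ s :=
    (Metric.closedBall_subset_ball (half_lt_self hr)).trans hball
  have hsmall : Metric.ball t₀ (r / 2) ⊆ s := Metric.ball_subset_closedBall.trans hclosed
  obtain ⟨M, hM⟩ := (isCompact_uIcc.prod (isCompact_closedBall t₀ (r / 2))
    ).exists_bound_of_continuousOn (hf'.mono (prod_mono le_rfl hclosed))
  refine (hasDerivAt_integral_of_dominated_loc_of_deriv_le
    (F := fun t z => f z t) (F' := fun t z => f' z t) (bound := fun _ => M)
    (Metric.ball_mem_nhds t₀ (half_pos hr))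
    (eventually_of_mem (hs.mem_nhds ht₀) fun t ht =>
      ((hf t ht).mono uIoc_subset_uIcc).aestronglyMeasurable measurableSet_uIoc)
    (hf t₀ ht₀).intervalIntegrable
    (((hf'.uncurry_right t₀ ht₀).mono uIoc_subset_uIcc).aestronglyMeasurable measurableSet_uIoc)
    (ae_of_all _ fun z hz t ht => hM (z, t) ⟨uIoc_subset_uIcc hz, Metric.ball_subset_closedBall ht⟩)
    intervalIntegrable_const
    (ae_of_all _ fun z hz t ht => hderiv z (uIoc_subset_uIcc hz) t (hsmall ht))).2

theorem le_exp_mul_of_hasDerivAt_le_mul_add {E E' g : ℝ → ℝ} {K a b : ℝ}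
    (hE : ContinuousOn E (Icc a b)) (hg : ContinuousOn g (Icc a b))
    (hE' : ∀ t ∈ Ioo a b, HasDerivAt E (E' t) t)
    (hbound : ∀ t ∈ Ioo a b, E' t ≤ K * E t + g t) {t : ℝ} (ht : t ∈ Icc a b) :
    E t ≤ exp (K * (t - a)) * (E a + ∫ s in a..t, exp (-(K * (s - a))) * g s) := by
  have hexpc : Continuous fun s => exp (-(K * (s - a))) := by fun_prop
  set φ : ℝ → ℝ := fun s => exp (-(K * (s - a))) * g s
  have hφ : ContinuousOn φ (Icc a b) := hexpc.continuousOn.mul hg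
  have hab : a ≤ b := ht.1.trans ht.2
  set G : ℝ → ℝ := fun u => exp (-(K * (u - a))) * E u - ∫ s in a..u, φ s
  have hG : AntitoneOn G (Icc a b) := by
    have hprim : ContinuousOn (fun u => ∫ s in a..u, φ s) (Icc a b) := by
      rw [← uIcc_of_le hab]
      exact continuousOn_primitive_interval (by
        rw [uIcc_of_le hab]; exact hφ.integrableOn_Icc)
    refine antitoneOn_of_hasDerivWithinAt_nonpos (convex_Icc a b)
      ((hexpc.continuousOn.mul hE).sub hprim)
      (f' := fun u => exp (-(K * (u - a))) * (E' u - K * E u - g u)) ?_ ?_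
    · rw [interior_Icc]
      intro u hu
      have hexp : HasDerivAt (fun u => exp (-(K * (u - a)))) (exp (-(K * (u - a))) * -K) u := by
        simpa using (((hasDerivAt_id u).sub_const a).const_mul K).neg.exp
      have hP : HasDerivAt (fun u => ∫ s in a..u, φ s) (φ u) u :=
        integral_hasDerivAt_right
          ((hφ.mono (Icc_subset_Icc le_rfl hu.2.le)).intervalIntegrable_of_Icc hu.1.le)
          ((hφ.mono Ioo_subset_Icc_self).stronglyMeasurableAtFilter isOpen_Ioo u hu)
          (hφ.continuousAt (Icc_mem_nhds hu.1 hu.2))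
      exact (((hexp.mul (hE' u hu)).sub hP).congr_deriv (by simp only [φ]; ring)).hasDerivWithinAt
    · rw [interior_Icc]
      intro u hu
      exact mul_nonpos_of_nonneg_of_nonpos (exp_pos _).le (by linarith [hbound u hu])
  have hGt : G t ≤ G a := hG ⟨le_rfl, hab⟩ ht ht.1
  simp only [G, sub_self, mul_zero, neg_zero, exp_zero, one_mul,
    integral_same, sub_zero] at hGt
  rw [← div_le_iff₀' (exp_pos _), div_eq_mul_inv, ← exp_neg, mul_comm]
  linarith

theorem le_exp_mul_add_integral_of_hasDerivAt_le {E E' g : ℝ → ℝ} {K a b : ℝ} (hK : 0 ≤ K)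
    (hE : ContinuousOn E (Icc a b)) (hg : ContinuousOn g (Icc a b))
    (hg_nonneg : ∀ s ∈ Icc a b, 0 ≤ g s) (hE' : ∀ t ∈ Ioo a b, HasDerivAt E (E' t) t)
    (hbound : ∀ t ∈ Ioo a b, E' t ≤ K * E t + g t) {t : ℝ} (ht : t ∈ Icc a b) :
    E t ≤ exp (K * (t - a)) * (E a + ∫ s in a..t, g s) := by
  refine (le_exp_mul_of_hasDerivAt_le_mul_add hE hg hE' hbound ht).trans ?_
  have hg' : ContinuousOn g (Icc a t) := hg.mono (Icc_subset_Icc le_rfl ht.2)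
  gcongr
  refine integral_mono_on ht.1
    (ContinuousOn.intervalIntegrable_of_Icc ht.1 (by fun_prop))
    (hg'.intervalIntegrable_of_Icc ht.1) fun s hs => ?_
  exact mul_le_of_le_one_left (hg_nonneg s ⟨hs.1, hs.2.trans ht.2⟩)
    (exp_le_one_iff.2 (neg_nonpos.2 (mul_nonneg hK (sub_nonneg.2 hs.1))))

-- The `+ 1` makes the constant at least `1`, so that it also dominates the initial energy.
noncomputable def energyConstant (h ε W k₀ : ℝ) : ℝ :=
  ε / 2 * (h⁻¹ + 1) + ε⁻¹ * W ^ 2 + 2 * ε⁻¹ * k₀ ^ 2 + 1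

theorem one_le_energyConstant {h ε : ℝ} (hh : 0 ≤ h) (hε : 0 ≤ ε) (W k₀ : ℝ) :
    1 ≤ energyConstant h ε W k₀ := by
  unfold energyConstant
  have : 0 ≤ ε / 2 * (h⁻¹ + 1) + ε⁻¹ * W ^ 2 + 2 * ε⁻¹ * k₀ ^ 2 := by positivity
  linarith

namespace ClassicalSolution

variable {h T : ℝ} {k w F q₀ : ℝ → ℝ} {q qz qzz qt : ℝ → ℝ → ℝ}

theorem continuousOn_energy (S : ClassicalSolution h T k w F q₀ q qz qzz qt) (hh : 0 ≤ h) :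
    ContinuousOn (fun t => ∫ z in (0:ℝ)..h, q z t ^ 2) (Icc 0 T) :=
  continuousOn_intervalIntegral_of_continuousOn_prod (f := fun z t => q z t ^ 2)
    (by rw [uIcc_of_le hh]; exact S.cont.pow 2)

theorem hasDerivAt_energy (S : ClassicalSolution h T k w F q₀ q qz qzz qt) (hh : 0 ≤ h)
    {t : ℝ} (ht : t ∈ Ioo 0 T) :
    HasDerivAt (fun t => ∫ z in (0:ℝ)..h, q z t ^ 2) (∫ z in (0:ℝ)..h, 2 * q z t * qt z t) t := by
  refine hasDerivAt_intervalIntegral_of_continuousOn (f := fun z t => q z t ^ 2)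
    (f' := fun z t => 2 * q z t * qt z t) isOpen_Ioo ht
    (fun t ht => ?_) ?_ (fun z hz t ht => ?_)
  · rw [uIcc_of_le hh]
    exact (S.cont.uncurry_right t (Ioo_subset_Icc_self ht)).pow 2
  · rw [uIcc_of_le hh]
    exact (continuousOn_const.mul (S.cont.mono (prod_mono le_rfl Ioo_subset_Icc_self))).mul
      (S.cont_t.mono (prod_mono le_rfl Ioo_subset_Ioc_self))
  · rw [uIcc_of_le hh] at hz
    exact (((S.hasDeriv_t z hz t (Ioo_subset_Ioc_self ht)).hasDerivAt
      (Icc_mem_nhds ht.1 ht.2)).pow 2).congr_deriv (by ring)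

theorem continuousOn_slice (S : ClassicalSolution h T k w F q₀ q qz qzz qt) {t : ℝ}
    (ht : t ∈ Icc 0 T) : ContinuousOn (fun z => q z t) (Icc 0 h) :=
  S.cont.uncurry_right t ht

theorem continuousOn_qz_slice (S : ClassicalSolution h T k w F q₀ q qz qzz qt) {t : ℝ}
    (ht : t ∈ Ioc 0 T) : ContinuousOn (fun z => qz z t) (Icc 0 h) :=
  S.cont_z.uncurry_right t ht

theorem hasDerivAt_slice (S : ClassicalSolution h T k w F q₀ q qz qzz qt) {t : ℝ}
    (ht : t ∈ Ioc 0 T) {z : ℝ} (hz : z ∈ Ioo 0 h) : HasDerivAt (fun z => q z t) (qz z t) z :=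
  (S.hasDeriv_z z (Ioo_subset_Icc_self hz) t ht).hasDerivAt (Icc_mem_nhds hz.1 hz.2)

theorem integral_energy_density_eq_flux (S : ClassicalSolution h T k w F q₀ q qz qzz qt)
    (hh : 0 ≤ h) (hk : DifferentiableOn ℝ k (Icc 0 h)) (hw : DifferentiableOn ℝ w (Icc 0 h))
    (hw0 : w 0 = 0) (hwh : w h = 0) {t : ℝ} (ht : t ∈ Ioc 0 T) :
    ∫ z in (0:ℝ)..h, (2 * q z t * qt z t + 2 * k z * qz z t ^ 2 - 2 * w z * q z t * qz z t)
      = 2 * k 0 * q 0 t * F t := by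
  have hderiv : ∀ {f : ℝ → ℝ}, DifferentiableOn ℝ f (Icc 0 h) →
      ∀ z ∈ Ioo 0 h, HasDerivAt f (derivWithin f (Icc 0 h) z) z := fun hf z hz =>
    (hf z (Ioo_subset_Icc_self hz)).hasDerivWithinAt.hasDerivAt (Icc_mem_nhds hz.1 hz.2)
  rw [integral_energy_density_eq hh (S.continuousOn_slice (Ioc_subset_Icc_self ht))
    (S.continuousOn_qz_slice ht) (S.cont_t.uncurry_right t ht) hk.continuousOn hw.continuousOn
    (fun z hz => S.hasDerivAt_slice ht hz)
    (fun z hz => (S.hasDeriv_zz z (Ioo_subset_Icc_self hz) t ht).hasDerivAt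
      (Icc_mem_nhds hz.1 hz.2))
    (hderiv hk) (hderiv hw) (fun z hz => S.pde z (Ioo_subset_Icc_self hz) t ht),
    S.bc_upper t ht, S.bc_lower t ht, hw0, hwh]
  ring

theorem integral_two_mul_qt_le (S : ClassicalSolution h T k w F q₀ q qz qzz qt)
    {ε W : ℝ} (hh : 0 < h) (hε : 0 < ε)
    (hk : DifferentiableOn ℝ k (Icc 0 h)) (hw : DifferentiableOn ℝ w (Icc 0 h))
    (hkε : ∀ z ∈ Icc (0:ℝ) h, ε ≤ k z) (hW : ∀ z ∈ Icc (0:ℝ) h, |w z| ≤ W)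
    (hw0 : w 0 = 0) (hwh : w h = 0) {t : ℝ} (ht : t ∈ Ioc 0 T) :
    ∫ z in (0:ℝ)..h, 2 * q z t * qt z t ≤
      energyConstant h ε W (k 0) * (∫ z in (0:ℝ)..h, q z t ^ 2)
        + energyConstant h ε W (k 0) * F t ^ 2 := by
  have hq := S.continuousOn_slice (Ioc_subset_Icc_self ht)
  have hqz := S.continuousOn_qz_slice ht
  have hqt : ContinuousOn (fun z => qt z t) (Icc 0 h) := S.cont_t.uncurry_right t ht
  have hkc := hk.continuousOn
  have hwc := hw.continuousOn
  set E := ∫ z in (0:ℝ)..h, q z t ^ 2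
  set D := ∫ z in (0:ℝ)..h, qz z t ^ 2
  have hE : 0 ≤ E := integral_nonneg hh.le fun _ _ => sq_nonneg _
  have hD : 0 ≤ D := integral_nonneg hh.le fun _ _ => sq_nonneg _
  have htrace : q 0 t ^ 2 ≤ (h⁻¹ + 1) * E + D := by
    simpa using sq_le_integral_sq_add_integral_deriv_sq hh hq hqz
      fun z hz => S.hasDerivAt_slice ht hz
  have hdissipation : ∫ z in (0:ℝ)..h, 2 * q z t * qt z t ≤
      2 * k 0 * q 0 t * F t + ε⁻¹ * W ^ 2 * E - ε * D := by
    have hint : ∀ {f : ℝ → ℝ}, ContinuousOn f (Icc 0 h) → IntervalIntegrable f volume 0 h :=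
      ContinuousOn.intervalIntegrable_of_Icc hh.le
    rw [← S.integral_energy_density_eq_flux hh.le hk hw hw0 hwh ht,
      ← intervalIntegral.integral_const_mul, ← intervalIntegral.integral_const_mul,
      ← integral_add (hint (by fun_prop (disch := assumption)))
        (hint (by fun_prop (disch := assumption))),
      ← integral_sub (hint (by fun_prop (disch := assumption)))
        (hint (by fun_prop (disch := assumption)))]
    refine integral_mono_on hh.le (hint (by fun_prop (disch := assumption)))
      (hint (by fun_prop (disch := assumption))) fun z hz => ?_
    have hyoung := two_mul_le_add_mul_sq (a := qz z t) (b := w z * q z t) hε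
    have hw2 : w z ^ 2 ≤ W ^ 2 := sq_le_sq' (neg_le_of_abs_le (hW z hz)) (le_of_abs_le (hW z hz))
    nlinarith [mul_le_mul_of_nonneg_left hw2 (mul_nonneg (inv_nonneg.2 hε.le) (sq_nonneg (q z t))),
      mul_le_mul_of_nonneg_right (hkε z hz) (sq_nonneg (qz z t))]
  have hflux : 2 * k 0 * q 0 t * F t ≤ ε / 2 * q 0 t ^ 2 + 2 * ε⁻¹ * k 0 ^ 2 * F t ^ 2 := by
    have := two_mul_le_add_mul_sq (a := q 0 t) (b := k 0 * F t) (half_pos hε)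
    calc 2 * k 0 * q 0 t * F t = 2 * q 0 t * (k 0 * F t) := by ring
      _ ≤ _ := this
      _ = _ := by ring
  unfold energyConstant
  linarith [mul_le_mul_of_nonneg_left htrace (half_pos hε).le, mul_nonneg (half_pos hε).le hD,
    mul_nonneg (by positivity : (0:ℝ) ≤ 2 * ε⁻¹ * k 0 ^ 2 + 1) hE,
    mul_nonneg (by positivity : (0:ℝ) ≤ ε / 2 * (h⁻¹ + 1) + ε⁻¹ * W ^ 2 + 1) (sq_nonneg (F t))]

end ClassicalSolution

theorem energy_estimate_general
    (h ε : ℝ) (k w : ℝ → ℝ) (hh : 0 < h) (hε : 0 < ε)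
    (hk : ContDiffOn ℝ 2 k (Icc 0 h)) (hw : ContDiffOn ℝ 2 w (Icc 0 h))
    (hkε : ∀ z ∈ Icc (0:ℝ) h, ε ≤ k z)
    (hw0 : w 0 = 0) (hwh : w h = 0) :
    ∃ K > (0:ℝ), ∀ (T : ℝ) (F q₀ : ℝ → ℝ) (q : ℝ → ℝ → ℝ),
      0 < T → ContinuousOn F (Icc 0 T) → ContDiffOn ℝ 1 q₀ (Icc 0 h) →
      IsClassicalSolution h T k w F q₀ q →
      ∀ t ∈ Icc (0:ℝ) T,
        (∫ z in (0:ℝ)..h, (q z t) ^ 2) ≤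
          K * Real.exp (K * t) * ((1 + t) * (∫ z in (0:ℝ)..h, (q₀ z) ^ 2)
            + (1 + t ^ 2) * ∫ s in (0:ℝ)..t, (F s) ^ 2) := by
  obtain ⟨W, hW⟩ := isCompact_Icc.exists_bound_of_continuousOn hw.continuousOn
  set K := energyConstant h ε W (k 0)
  have hK : 1 ≤ K := one_le_energyConstant hh.le hε.le W (k 0)
  have hK₀ : 0 ≤ K := zero_le_one.trans hK
  refine ⟨K, by linarith, fun T F q₀ q _ hF _ ⟨qz, qzz, qt, S⟩ t ht => ?_⟩
  have hinit : ∫ z in (0:ℝ)..h, q z 0 ^ 2 = ∫ z in (0:ℝ)..h, q₀ z ^ 2 :=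
    integral_congr fun z hz => by rw [S.ic z (uIcc_of_le hh.le ▸ hz)]
  have hI₀ : 0 ≤ ∫ z in (0:ℝ)..h, q₀ z ^ 2 :=
    integral_nonneg hh.le fun _ _ => sq_nonneg _
  have hIF : 0 ≤ ∫ s in (0:ℝ)..t, F s ^ 2 :=
    integral_nonneg ht.1 fun _ _ => sq_nonneg _
  calc (∫ z in (0:ℝ)..h, q z t ^ 2)
      ≤ exp (K * (t - 0)) * ((∫ z in (0:ℝ)..h, q z 0 ^ 2) + ∫ s in (0:ℝ)..t, K * F s ^ 2) :=
        le_exp_mul_add_integral_of_hasDerivAt_le hK₀ (S.continuousOn_energy hh.le)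
          ((hF.pow 2).const_mul K) (fun s _ => mul_nonneg hK₀ (sq_nonneg _))
          (fun s hs => S.hasDerivAt_energy hh.le hs)
          (fun s hs => S.integral_two_mul_qt_le hh hε (hk.differentiableOn two_ne_zero)
            (hw.differentiableOn two_ne_zero) hkε (fun z hz => (norm_eq_abs (w z) ▸ hW z hz))
            hw0 hwh (Ioo_subset_Ioc_self hs)) ht
    _ = exp (K * t) * ((∫ z in (0:ℝ)..h, q₀ z ^ 2) + K * ∫ s in (0:ℝ)..t, F s ^ 2) := by
        rw [sub_zero, hinit, intervalIntegral.integral_const_mul]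
    _ ≤ K * exp (K * t) * ((1 + t) * (∫ z in (0:ℝ)..h, q₀ z ^ 2)
          + (1 + t ^ 2) * ∫ s in (0:ℝ)..t, F s ^ 2) := by
        rw [mul_comm K (exp _), mul_assoc]
        gcongr
        nlinarith [mul_nonneg (sub_nonneg.2 hK) hI₀, mul_nonneg (mul_nonneg hK₀ ht.1) hI₀,
          mul_nonneg (mul_nonneg hK₀ (sq_nonneg t)) hIF]

/-- Energy estimate: the spatial `L²` norm of the solution is controlled by the
initial data and the flux, with a constant depending only on `sup |w|`, `k(0)`,
`ε` and `h`. -/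
theorem energy_estimate
    (h ε : ℝ) (k w : ℝ → ℝ) (hh : 0 < h) (hε : 0 < ε)
    (hk : ContDiffOn ℝ 2 k (Icc 0 h)) (hw : ContDiffOn ℝ 2 w (Icc 0 h))
    (hkpos : ∀ z ∈ Icc (0:ℝ) h, 0 < k z)
    (hkε : ∀ z ∈ Icc (0:ℝ) h, ε ≤ k z)
    (hw0 : w 0 = 0) (hwh : w h = 0) :
    ∃ K > (0:ℝ), ∀ (T : ℝ) (F q₀ : ℝ → ℝ) (q : ℝ → ℝ → ℝ),
      0 < T → ContinuousOn F (Icc 0 T) → ContDiffOn ℝ 1 q₀ (Icc 0 h) →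
      IsClassicalSolution h T k w F q₀ q →
      ∀ t ∈ Icc (0:ℝ) T,
        (∫ z in (0:ℝ)..h, (q z t) ^ 2) ≤
          K * Real.exp (K * t) * ((1 + t) * (∫ z in (0:ℝ)..h, (q₀ z) ^ 2)
            + (1 + t ^ 2) * ∫ s in (0:ℝ)..t, (F s) ^ 2) :=
  energy_estimate_general h ε k w hh hε hk hw hkε hw0 hwh
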